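/- Let a finite-horizon MDP with real-valued reward be given. For every policy π, the goal-conditioned update improves all soft values: V^{G(π)}_t(s) ≥ V^π_t(s) for every t ≤ T and every state s. Consequently, for any prior policy p, the success probabilities of the control-as-inference sequence are monotone: P(π^G_{i+1}) ≥ P(π^G_i) for every i ≥ 0. -/

import Mathlib

open scoped BigOperators ENNReal

/-- A finite-horizon MDP: finite nonempty state and action types, transition kernel,
initial distribution, horizon `T` (time steps `0,…,T`), and non-positive real reward. -/
structure MDP where
  S : Type
  A : Type
  [fintS : Fintype S]
  [fintA : Fintype A]
  [deceqS : DecidableEq S]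
  [deceqA : DecidableEq A]
  [noneS : Nonempty S]
  [noneA : Nonempty A]
  tk : S → A → PMF S
  init : PMF S
  T : ℕ
  r : S → A → ℝ
  r_nonpos : ∀ s a, r s a ≤ 0

attribute [instance] MDP.fintS MDP.fintA MDP.deceqS MDP.deceqA MDP.noneS MDP.noneA

/-- A policy: a family of action distributions, one for each time step and state. -/
abbrev MDP.Policy (M : MDP) : Type := ℕ → M.S → PMF M.A

/-- Deterministic transitions: every `τ(s,a)` is a point mass. -/
def MDP.Det (M : MDP) : Prop := ∀ s a, ∃ s', M.tk s a = PMF.pure s'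

/-- Soft `Q` for a (possibly time-indexed) reward `r'`, indexed by the number of remaining
steps `k` (so that the actual time is `M.T - k`):
`Q_T(s,a) = r'_T(s,a)` and, for `t < T`,
`Q_t(s,a) = r'_t(s,a) + log E_{s'∼τ(s,a)}[exp V_{t+1}(s')]` with
`V_t(s) = log E_{a∼π_t(s)}[exp Q_t(s,a)]`. -/
noncomputable def QrevR (M : MDP) (r' : ℕ → M.S → M.A → ℝ) (π : M.Policy) :
    ℕ → M.S → M.A → ℝ
  | 0 => fun s a => r' M.T s a
  | (k+1) => fun s a => r' (M.T - (k+1)) s a +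
      Real.log (∑ s' : M.S, (M.tk s a s').toReal *
        Real.exp (Real.log (∑ a' : M.A, ((π (M.T - k) s') a').toReal *
          Real.exp (QrevR M r' π k s' a'))))

/-- Soft `Q^{π,r'}_t` at actual time `t`. -/
noncomputable def softQR (M : MDP) (r' : ℕ → M.S → M.A → ℝ) (π : M.Policy)
    (t : ℕ) : M.S → M.A → ℝ :=
  QrevR M r' π (M.T - t)

/-- Soft `Q^π_t` for the MDP's own reward. -/
noncomputable def softQ (M : MDP) (π : M.Policy) (t : ℕ) : M.S → M.A → ℝ :=
  softQR M (fun _ => M.r) π t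

/-- Soft `V^π_t(s) = log E_{a∼π_t(s)}[exp Q^π_t(s,a)]`. -/
noncomputable def softV (M : MDP) (π : M.Policy) (t : ℕ) (s : M.S) : ℝ :=
  Real.log (∑ a : M.A, ((π t s) a).toReal * Real.exp (softQ M π t s a))

/-- A trajectory `ξ = (s_0,…,s_T, a_0,…,a_T)`. -/
abbrev MDP.Traj (M : MDP) : Type := (Fin (M.T + 1) → M.S) × (Fin (M.T + 1) → M.A)

/-- The probability of a trajectory under policy `π`:
`s_0 ∼ μ`, `a_t ∼ π_t(s_t)`, `s_{t+1} ∼ τ(s_t,a_t)`. -/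
noncomputable def trajP (M : MDP) (π : M.Policy) (ξ : M.Traj) : ℝ≥0∞ :=
  M.init (ξ.1 0) * (∏ t : Fin (M.T + 1), (π t.val (ξ.1 t)) (ξ.2 t)) *
    ∏ t : Fin M.T, (M.tk (ξ.1 t.castSucc) (ξ.2 t.castSucc)) (ξ.1 t.succ)

open Classical in
/-- Kullback–Leibler divergence between two probability mass functions on a finite type,
valued in `[0,∞]`. -/
noncomputable def KLfin {α : Type} [Fintype α] (q p : α → ℝ≥0∞) : ℝ≥0∞ :=
  if ∀ a, p a = 0 → q a = 0 then
    ENNReal.ofReal (∑ a : α, (q a).toReal * Real.log ((q a).toReal / (p a).toReal))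
  else ⊤

/-- Occupancy measure: the probability that the state at time `t` is `s` under `p_π`. -/
noncomputable def occ (M : MDP) (π : M.Policy) (t : Fin (M.T + 1)) (s : M.S) : ℝ≥0∞ :=
  ∑ ξ : M.Traj, if ξ.1 t = s then trajP M π ξ else 0

/-- The return `J(π) = E_{ξ∼p_π}[Σ_t r(s_t,a_t)]`. -/
noncomputable def Jret (M : MDP) (π : M.Policy) : ℝ :=
  ∑ ξ : M.Traj, (trajP M π ξ).toReal * ∑ t : Fin (M.T + 1), M.r (ξ.1 t) (ξ.2 t)

/-- Success probability `P(π) = E_{ξ∼p_π}[∏_t exp r(s_t,a_t)]`. -/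
noncomputable def successP (M : MDP) (π : M.Policy) : ℝ :=
  ∑ ξ : M.Traj, (trajP M π ξ).toReal * ∏ t : Fin (M.T + 1), Real.exp (M.r (ξ.1 t) (ξ.2 t))

/-- Normalisation of a nonzero, finite weight function on a finite type into a `PMF`. -/
noncomputable def normPMF {α : Type} [Fintype α] (f : α → ℝ≥0∞)
    (h0 : ∃ a, f a ≠ 0) (hfin : ∀ a, f a ≠ ∞) : PMF α :=
  PMF.normalize f
    (fun h => by obtain ⟨a, ha⟩ := h0; exact ha (ENNReal.tsum_eq_zero.mp h a))
    (by
      rw [tsum_fintype]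
      exact (ENNReal.sum_lt_top.mpr fun a _ => (hfin a).lt_top).ne)

/-- The control-as-inference operator:
`G(π)_t(a|s) ∝ π_t(a|s)·exp(Q^π_t(s,a))`. -/
noncomputable def Gop (M : MDP) (π : M.Policy) : M.Policy := fun t s =>
  normPMF (fun a => (π t s) a * ENNReal.ofReal (Real.exp (softQ M π t s a)))
    (by
      obtain ⟨a, ha⟩ := (π t s).support_nonempty
      exact ⟨a, mul_ne_zero (((π t s).mem_support_iff a).mp ha)
        (ENNReal.ofReal_pos.mpr (Real.exp_pos _)).ne'⟩)
    (fun a => ENNReal.mul_ne_top (PMF.apply_ne_top _ _) ENNReal.ofReal_ne_top)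

/-- The control-as-inference sequence: `π^G_0 = p`, `π^G_{i+1} = G(π^G_i)`. -/
noncomputable def Gseq (M : MDP) (p : M.Policy) : ℕ → M.Policy
  | 0 => p
  | (k+1) => Gop M (Gseq M p k)

/-- The Boltzmann policy `π^δ_t(a|s) ∝ exp(Q^π_t(s,a)/δ)`. -/
noncomputable def Boltz (M : MDP) (π : M.Policy) (δ : ℝ) : M.Policy := fun t s =>
  normPMF (fun a => ENNReal.ofReal (Real.exp (softQ M π t s a / δ)))
    ⟨Classical.arbitrary M.A, (ENNReal.ofReal_pos.mpr (Real.exp_pos _)).ne'⟩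
    (fun _ => ENNReal.ofReal_ne_top)

/-- Boltzmann incoherence `κ_δ(π) = KL(p_π ‖ p_{π^δ})`. -/
noncomputable def kappaDelta (M : MDP) (π : M.Policy) (δ : ℝ) : ℝ≥0∞ :=
  KLfin (trajP M π) (trajP M (Boltz M π δ))

/-!
`G(π)_t(·|s)` is `π_t(·|s)` tilted by `exp Q^π_t(s,·)`, and tilting a distribution by a positive
function does not decrease the mean of that function (Jensen for `x ↦ x²`):
`E_{G(π)}[exp Q^π] = E_π[exp 2Q^π] / E_π[exp Q^π] ≥ E_π[exp Q^π]`.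
The backward recursion `exp Q_t(s,a) = exp r(s,a) · E_{s'}[exp V_{t+1}(s')]` is monotone, so
backward induction gives `Q^{G(π)} ≥ Q^π`, and with the tilting inequality `V^{G(π)} ≥ V^π`.
Summing the trajectory distribution backwards in time gives `P(π) = E_{s∼μ}[exp V^π_0(s)]`,
so the success probability increases along the control-as-inference sequence.
-/

open Finset

theorem PMF.sum_toReal_eq_one {α : Type*} [Fintype α] (p : PMF α) :
    ∑ a, (p a).toReal = 1 := by
  rw [← ENNReal.toReal_sum fun a _ => p.apply_ne_top a, ← tsum_fintype (L := .unconditional _),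
    p.tsum_coe, ENNReal.toReal_one]

theorem PMF.sum_toReal_mul_pos {α : Type*} [Fintype α] (p : PMF α) {f : α → ℝ}
    (hf : ∀ a, 0 < f a) : 0 < ∑ a, (p a).toReal * f a := by
  obtain ⟨a, ha⟩ := p.support_nonempty
  exact sum_pos' (fun b _ => mul_nonneg ENNReal.toReal_nonneg (hf b).le)
    ⟨a, mem_univ a, mul_pos (ENNReal.toReal_pos ha (p.apply_ne_top a)) (hf a)⟩

theorem sum_mul_le_sum_tilted_mul {ι : Type*} [Fintype ι] {w x : ι → ℝ} (hw : ∀ i, 0 ≤ w i)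
    (hw1 : ∑ i, w i = 1) (hpos : 0 < ∑ i, w i * x i) :
    ∑ i, w i * x i ≤ ∑ i, w i * x i / (∑ j, w j * x j) * x i := by
  have jensen : (∑ i, w i * x i) ^ 2 ≤ ∑ i, w i * x i ^ 2 := by
    simpa only [smul_eq_mul] using (even_two.convexOn_pow (𝕜 := ℝ)).map_sum_le
      (fun i _ => hw i) hw1 (fun i _ => Set.mem_univ (x i))
  simp only [div_mul_eq_mul_div, ← sum_div]
  rw [le_div_iff₀ hpos]
  simpa only [mul_assoc, ← sq] using jensen

section PathWeight

variable {X R : Type*} [Fintype X] [CommSemiring R]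

/-- Total weight of the paths of length `n` starting at `x`, with weight `f t` on the `t`-th
vertex and weight `g` on each edge. -/
def pathWeight (f : ℕ → X → R) (g : X → X → R) : ℕ → X → R
  | 0, x => f 0 x
  | n + 1, x => f 0 x * ∑ y, g x y * pathWeight (fun t => f (t + 1)) g n y

theorem sum_paths_eq_sum_pathWeight (g : X → X → R) (n : ℕ) (f : ℕ → X → R) (ν : X → R) :
    ∑ x : Fin (n + 1) → X, ν (x 0) * ((∏ t : Fin (n + 1), f t (x t)) *
      ∏ t : Fin n, g (x t.castSucc) (x t.succ)) = ∑ x, ν x * pathWeight f g n x := by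
  induction n generalizing f ν with
  | zero =>
    rw [← (Equiv.funUnique (Fin 1) X).symm.sum_comp]
    simp [pathWeight]
  | succ n ih =>
    rw [← (Fin.consEquiv fun _ => X).sum_comp, Fintype.sum_prod_type]
    refine sum_congr rfl fun x _ => ?_
    rw [pathWeight, ← mul_assoc, ← ih, mul_sum]
    refine sum_congr rfl fun y _ => ?_
    rw [Fin.prod_univ_succ (n := n), Fin.prod_univ_succ (n := n + 1)]
    simp only [Fin.consEquiv_apply, Fin.cons_zero, Fin.cons_succ, Fin.castSucc_zero,
      ← Fin.succ_castSucc, Fin.val_zero, Fin.val_succ]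
    ring

end PathWeight

section SoftValues

variable (M : MDP) (π : M.Policy)

/-- `exp V^π_{T-k}`, indexed like `QrevR` by the number `k` of remaining steps. -/
noncomputable def expVrev (k : ℕ) (s : M.S) : ℝ :=
  ∑ a, (π (M.T - k) s a).toReal * Real.exp (QrevR M (fun _ => M.r) π k s a)

theorem expVrev_pos (k : ℕ) (s : M.S) : 0 < expVrev M π k s :=
  (π _ s).sum_toReal_mul_pos fun _ => Real.exp_pos _

theorem softV_eq_log_expVrev {t : ℕ} (ht : t ≤ M.T) (s : M.S) :
    softV M π t s = Real.log (expVrev M π (M.T - t) s) := by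
  rw [expVrev, Nat.sub_sub_self ht]
  rfl

theorem exp_QrevR_succ (k : ℕ) (s : M.S) (a : M.A) :
    Real.exp (QrevR M (fun _ => M.r) π (k + 1) s a) =
      Real.exp (M.r s a) * ∑ s', (M.tk s a s').toReal * expVrev M π k s' := by
  change Real.exp (M.r s a + Real.log (∑ s', (M.tk s a s').toReal *
    Real.exp (Real.log (expVrev M π k s')))) = _
  simp only [Real.exp_log (expVrev_pos M π k _)]
  rw [Real.exp_add, Real.exp_log ((M.tk s a).sum_toReal_mul_pos (expVrev_pos M π k))]

theorem Gop_apply_toReal (t : ℕ) (s : M.S) (a : M.A) :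
    (Gop M π t s a).toReal = (π t s a).toReal * Real.exp (softQ M π t s a) /
      ∑ b, (π t s b).toReal * Real.exp (softQ M π t s b) := by
  have hfin : ∀ b, π t s b * ENNReal.ofReal (Real.exp (softQ M π t s b)) ≠ ⊤ :=
    fun b => ENNReal.mul_ne_top (PMF.apply_ne_top _ _) ENNReal.ofReal_ne_top
  rw [Gop, normPMF, PMF.normalize_apply, tsum_fintype, ENNReal.toReal_mul, ENNReal.toReal_inv,
    ENNReal.toReal_sum fun b _ => hfin b, div_eq_mul_inv]
  simp only [ENNReal.toReal_mul, ENNReal.toReal_ofReal (Real.exp_nonneg _)]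

theorem expVrev_le_expVrev_Gop_of_QrevR_le {k : ℕ} (hk : k ≤ M.T)
    (hQ : ∀ s a, QrevR M (fun _ => M.r) π k s a ≤ QrevR M (fun _ => M.r) (Gop M π) k s a)
    (s : M.S) : expVrev M π k s ≤ expVrev M (Gop M π) k s := by
  set w : M.A → ℝ := fun a => (π (M.T - k) s a).toReal
  set x : M.A → ℝ := fun a => Real.exp (QrevR M (fun _ => M.r) π k s a)
  have hG : ∀ a, (Gop M π (M.T - k) s a).toReal = w a * x a / ∑ b, w b * x b := fun a => by
    rw [Gop_apply_toReal, softQ, softQR, Nat.sub_sub_self hk]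
  calc expVrev M π k s = ∑ a, w a * x a := rfl
    _ ≤ ∑ a, w a * x a / (∑ b, w b * x b) * x a :=
      sum_mul_le_sum_tilted_mul (fun _ => ENNReal.toReal_nonneg) (π _ s).sum_toReal_eq_one
        (expVrev_pos M π k s)
    _ = ∑ a, (Gop M π (M.T - k) s a).toReal * x a := by simp only [hG]
    _ ≤ expVrev M (Gop M π) k s := sum_le_sum fun a _ =>
      mul_le_mul_of_nonneg_left (Real.exp_le_exp.mpr (hQ s a)) ENNReal.toReal_nonneg

theorem QrevR_le_QrevR_Gop {k : ℕ} (hk : k ≤ M.T) (s : M.S) (a : M.A) :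
    QrevR M (fun _ => M.r) π k s a ≤ QrevR M (fun _ => M.r) (Gop M π) k s a := by
  induction k generalizing s a with
  | zero => exact le_rfl
  | succ k ih =>
    rw [← Real.exp_le_exp, exp_QrevR_succ, exp_QrevR_succ]
    gcongr with s'
    exact expVrev_le_expVrev_Gop_of_QrevR_le M π (by omega) (ih (by omega)) s'

theorem expVrev_le_expVrev_Gop {k : ℕ} (hk : k ≤ M.T) (s : M.S) :
    expVrev M π k s ≤ expVrev M (Gop M π) k s :=
  expVrev_le_expVrev_Gop_of_QrevR_le M π hk (QrevR_le_QrevR_Gop M π hk) s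

end SoftValues

section SuccessProbability

variable (M : MDP) (π : M.Policy)

theorem pathWeight_eq_mul_exp_QrevR {k : ℕ} (hk : k ≤ M.T) (x : M.S × M.A) :
    pathWeight (fun t y => (π (M.T - k + t) y.1 y.2).toReal * Real.exp (M.r y.1 y.2))
      (fun y z => (M.tk y.1 y.2 z.1).toReal) k x =
    (π (M.T - k) x.1 x.2).toReal * Real.exp (QrevR M (fun _ => M.r) π k x.1 x.2) := by
  induction k generalizing x with
  | zero => rfl
  | succ k ih =>
    have htime : ∀ t, M.T - (k + 1) + (t + 1) = M.T - k + t := fun t => by omega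
    rw [pathWeight]
    simp only [htime, ih (by omega), Fintype.sum_prod_type]
    rw [exp_QrevR_succ]
    simp only [expVrev, mul_sum, add_zero, mul_assoc]

theorem successP_eq_sum_expVrev :
    successP M π = ∑ s, (M.init s).toReal * expVrev M π M.T s := by
  -- a trajectory is a path in `S × A`, with vertex weights `π_t(a|s) exp r(s,a)` and edge
  -- weights `τ(s,a)(s')`
  have hpaths := sum_paths_eq_sum_pathWeight
    (fun (y z : M.S × M.A) => (M.tk y.1 y.2 z.1).toReal) M.T
    (fun t y => (π t y.1 y.2).toReal * Real.exp (M.r y.1 y.2)) (fun y => (M.init y.1).toReal)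
  have hweight := pathWeight_eq_mul_exp_QrevR M π le_rfl
  simp only [Nat.sub_self, zero_add] at hweight
  simp only [hweight, Fintype.sum_prod_type, ← mul_sum] at hpaths
  simp only [expVrev, Nat.sub_self]
  rw [← hpaths, successP, ← (Equiv.arrowProdEquivProdArrow _ _ _).sum_comp]
  refine sum_congr rfl fun x _ => ?_
  simp only [trajP, Equiv.arrowProdEquivProdArrow_apply, ENNReal.toReal_mul, ENNReal.toReal_prod,
    prod_mul_distrib]
  ring

end SuccessProbability

/-- the goal-conditioned update improves all soft values,
`V^{G(π)}_t(s) ≥ V^π_t(s)` for every `t ≤ T` and state `s`; consequently the success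
probabilities of the control-as-inference sequence are monotone:
`P(π^G_{i+1}) ≥ P(π^G_i)` for every prior `p` and every `i`. -/
theorem stmt12 (M : MDP) (π : M.Policy) :
    (∀ t ≤ M.T, ∀ s : M.S, softV M π t s ≤ softV M (Gop M π) t s) ∧
    (∀ p : M.Policy, ∀ i : ℕ, successP M (Gseq M p i) ≤ successP M (Gseq M p (i + 1))) := by
  refine ⟨fun t ht s => ?_, fun p i => ?_⟩
  · rw [softV_eq_log_expVrev M π ht, softV_eq_log_expVrev M (Gop M π) ht]
    exact Real.log_le_log (expVrev_pos M π _ s) (expVrev_le_expVrev_Gop M π (Nat.sub_le _ _) s)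
  · rw [Gseq, successP_eq_sum_expVrev, successP_eq_sum_expVrev]
    exact sum_le_sum fun s _ =>
      mul_le_mul_of_nonneg_left (expVrev_le_expVrev_Gop M _ le_rfl s) ENNReal.toReal_nonneg
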